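/- arXiv:1603.09468 — 2 statements merged into one kernel-verified Lean document; each statement's English description precedes it below -/
import Mathlib

section
/- Let λ ≤ 0, α ∈ (0,2), n ≥ 1, and x ∈ Σ_λ = {z ∈ ℝ^n : z_1 < λ}. Then the ball B of radius |x| centered at x¹ := (3|x| + x_1, x') is contained in ℝ^n \ Σ_λ, and for all y ∈ B one has |x − y| ≤ 4|x|; consequently ∫_{Σ_λ} |x − y^λ|^{−(n+α)} dy ≥ ω_n / (4^{n+α} |x|^α), where ω_n is the volume of the unit ball in ℝ^n. -/
open Set MeasureTheory

/-- Reflection of `y` across the hyperplane `{z : z 0 = l}`. -/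
noncomputable def reflHyp {n : ℕ} [NeZero n] (l : ℝ) (y : EuclideanSpace ℝ (Fin n)) :
    EuclideanSpace ℝ (Fin n) :=
  WithLp.toLp 2 (Function.update y 0 (2 * l - y 0))

/-- The point `x¹ = (3|x| + x_1, x')`. -/
noncomputable def shiftPt {n : ℕ} [NeZero n] (x : EuclideanSpace ℝ (Fin n)) :
    EuclideanSpace ℝ (Fin n) :=
  WithLp.toLp 2 (Function.update x 0 (3 * ‖x‖ + x 0))

/-!
Substituting `y ↦ y^λ` turns the kernel into `|y − x^λ|^{−(n+α)}`. The point `x^λ` lies at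
distance at least `λ − x_1 > 0` from `Σ_λ`, so this kernel is integrable over `Σ_λ` because
`n + α > n`. The reflection `B^λ` of the ball `B` lies in `Σ_λ`, and on it
`|y − x^λ| = |x − y^λ| ≤ 4|x|`, so the integral is at least `(4|x|)^{−(n+α)} · ω_n |x|^n`.
-/

open Metric Module

lemma rpow_neg_le_mul_one_add_rpow_neg {d t s : ℝ} (hd : 0 < d) (ht : d ≤ t) (hs : 0 ≤ s) :
    t ^ (-s) ≤ ((1 + d) / d) ^ s * (1 + t) ^ (-s) := by
  have ht0 : 0 < t := hd.trans_le ht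
  have h1t : 1 + t ≤ (1 + d) / d * t := by
    rw [div_mul_eq_mul_div, le_div_iff₀ hd]
    nlinarith
  have hpow : (1 + t) ^ s ≤ ((1 + d) / d) ^ s * t ^ s := by
    rw [← Real.mul_rpow (by positivity) ht0.le]
    exact Real.rpow_le_rpow (by positivity) h1t hs
  rw [Real.rpow_neg ht0.le, Real.rpow_neg (by positivity), ← div_eq_mul_inv,
    le_div_iff₀ (by positivity), ← div_eq_inv_mul, div_le_iff₀ (by positivity)]
  exact hpow

lemma mul_rpow_neg_mul_pow_mul {a r : ℝ} (ha : 0 < a) (hr : 0 < r) (n : ℕ) (α ω : ℝ) :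
    (a * r) ^ (-((n : ℝ) + α)) * (r ^ n * ω) = ω / (a ^ ((n : ℝ) + α) * r ^ α) := by
  rw [Real.rpow_neg (by positivity), Real.mul_rpow ha.le hr.le, Real.rpow_add hr,
    Real.rpow_natCast]
  field_simp

theorem integrableOn_compl_ball_rpow_neg_norm_sub {E : Type*} [NormedAddCommGroup E]
    [NormedSpace ℝ E] [FiniteDimensional ℝ E] [MeasurableSpace E] [BorelSpace E]
    (μ : Measure E) [μ.IsAddHaarMeasure] (c : E) {d s : ℝ} (hd : 0 < d)
    (hs : (finrank ℝ E : ℝ) < s) :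
    IntegrableOn (fun y => ‖y - c‖ ^ (-s)) (ball c d)ᶜ μ := by
  have hdom : Integrable (fun y => ((1 + d) / d) ^ s * (1 + ‖y - c‖) ^ (-s)) μ :=
    ((integrable_one_add_norm hs).comp_sub_right c).const_mul _
  refine hdom.integrableOn.mono' (by fun_prop : Measurable _).aestronglyMeasurable
    ((ae_restrict_iff' measurableSet_ball.compl).2 (ae_of_all _ fun y hy => ?_))
  rw [Real.norm_of_nonneg (by positivity)]
  exact rpow_neg_le_mul_one_add_rpow_neg hd (by simpa [dist_eq_norm] using hy)
    ((Nat.cast_nonneg _).trans hs.le)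

theorem mul_measureReal_le_setIntegral {X : Type*} [MeasurableSpace X] {μ : Measure X}
    {f : X → ℝ} {s t : Set X} {c : ℝ} (hs : MeasurableSet s) (hμs : μ s ≠ ⊤) (hst : s ⊆ t)
    (hf : IntegrableOn f t μ) (hf0 : 0 ≤ᵐ[μ.restrict t] f) (hc : ∀ y ∈ s, c ≤ f y) :
    c * μ.real s ≤ ∫ y in t, f y ∂μ :=
  (setIntegral_ge_of_const_le_real hs hμs hc (hf.mono_set hst)).trans
    (setIntegral_mono_set hf hf0 hst.eventuallyLE)

section Reflection

variable {n : ℕ} [NeZero n]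

@[simp]
lemma reflHyp_apply_zero (l : ℝ) (y : EuclideanSpace ℝ (Fin n)) :
    reflHyp l y 0 = 2 * l - y 0 := by
  simp [reflHyp]

@[simp]
lemma shiftPt_apply_zero (x : EuclideanSpace ℝ (Fin n)) : shiftPt x 0 = 3 * ‖x‖ + x 0 := by
  simp [shiftPt]

lemma norm_sub_reflHyp_comm (l : ℝ) (x y : EuclideanSpace ℝ (Fin n)) :
    ‖x - reflHyp l y‖ = ‖y - reflHyp l x‖ := by
  rw [EuclideanSpace.norm_eq, EuclideanSpace.norm_eq]
  congr 1
  refine Finset.sum_congr rfl fun i _ => ?_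
  rcases eq_or_ne i 0 with rfl | hi
  · simp only [reflHyp, PiLp.sub_apply, Function.update_self, Real.norm_eq_abs, sq_abs]
    ring
  · simp only [reflHyp, PiLp.sub_apply, Function.update_of_ne hi, Real.norm_eq_abs, sq_abs]
    ring

lemma reflHyp_mem_ball {l r : ℝ} {y z : EuclideanSpace ℝ (Fin n)} :
    reflHyp l y ∈ ball z r ↔ y ∈ ball (reflHyp l z) r := by
  rw [mem_ball, mem_ball, dist_eq_norm, dist_eq_norm, ← norm_neg, neg_sub,
    norm_sub_reflHyp_comm]

lemma halfspace_subset_compl_ball_reflHyp (l : ℝ) (x : EuclideanSpace ℝ (Fin n)) :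
    {y : EuclideanSpace ℝ (Fin n) | y 0 < l} ⊆ (ball (reflHyp l x) (l - x 0))ᶜ := by
  intro y (hy : y 0 < l) hball
  have hcoord := (PiLp.norm_apply_le (y - reflHyp l x) 0).trans_lt
    (by rwa [mem_ball, dist_eq_norm] at hball)
  simp only [PiLp.sub_apply, reflHyp_apply_zero, Real.norm_eq_abs, abs_lt] at hcoord
  exact absurd hy (by linarith)

lemma dist_shiftPt_self (x : EuclideanSpace ℝ (Fin n)) : dist (shiftPt x) x = 3 * ‖x‖ := by
  have hsub : shiftPt x - x = EuclideanSpace.single 0 (3 * ‖x‖) := by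
    ext i
    rcases eq_or_ne i 0 with rfl | hi
    · simp
    · simp [shiftPt, hi]
  rw [dist_eq_norm, hsub, PiLp.norm_single, Real.norm_of_nonneg (by positivity)]

lemma norm_lt_apply_zero_of_mem_ball_shiftPt {x y : EuclideanSpace ℝ (Fin n)}
    (hy : y ∈ ball (shiftPt x) ‖x‖) : ‖x‖ < y 0 := by
  have hcoord := (PiLp.norm_apply_le (y - shiftPt x) 0).trans_lt
    (by rwa [mem_ball, dist_eq_norm] at hy)
  have hx0 : -‖x‖ ≤ x 0 := neg_le_of_abs_le (PiLp.norm_apply_le x 0)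
  simp only [PiLp.sub_apply, shiftPt_apply_zero, Real.norm_eq_abs, abs_lt] at hcoord
  linarith

lemma norm_sub_le_of_mem_ball_shiftPt {x y : EuclideanSpace ℝ (Fin n)}
    (hy : y ∈ ball (shiftPt x) ‖x‖) : ‖x - y‖ ≤ 4 * ‖x‖ := by
  rw [mem_ball, dist_comm] at hy
  calc ‖x - y‖ ≤ dist x (shiftPt x) + dist (shiftPt x) y := by
        rw [← dist_eq_norm]; exact dist_triangle _ _ _
    _ ≤ 4 * ‖x‖ := by rw [dist_comm, dist_shiftPt_self]; linarith

lemma ball_reflHyp_shiftPt_subset_halfspace {l : ℝ} (hl : l ≤ 0) (x : EuclideanSpace ℝ (Fin n)) :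
    ball (reflHyp l (shiftPt x)) ‖x‖ ⊆ {y : EuclideanSpace ℝ (Fin n) | y 0 < l} := by
  intro y hy
  have := norm_lt_apply_zero_of_mem_ball_shiftPt (reflHyp_mem_ball.2 hy)
  rw [reflHyp_apply_zero] at this
  show y 0 < l
  linarith [norm_nonneg x]

end Reflection

theorem kernel_integral_lower_bound_general {n : ℕ} [NeZero n] (α l : ℝ)
    (hα : α ∈ Ioo (0 : ℝ) 2) (hl : l ≤ 0)
    (x : EuclideanSpace ℝ (Fin n)) (hx : x 0 < l) :
    Metric.ball (shiftPt x) ‖x‖ ⊆ {y : EuclideanSpace ℝ (Fin n) | y 0 < l}ᶜ ∧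
    (∀ y ∈ Metric.ball (shiftPt x) ‖x‖, ‖x - y‖ ≤ 4 * ‖x‖) ∧
    (volume (Metric.ball (0 : EuclideanSpace ℝ (Fin n)) 1)).toReal /
        ((4 : ℝ) ^ ((n : ℝ) + α) * ‖x‖ ^ α) ≤
      ∫ y in {y : EuclideanSpace ℝ (Fin n) | y 0 < l},
        ‖x - reflHyp l y‖ ^ (-((n : ℝ) + α)) := by
  have hxpos : 0 < ‖x‖ := norm_pos_iff.2 fun h => by simp [h] at hx; linarith
  refine ⟨fun y hy => not_lt.2 ((hl.trans hxpos.le).trans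
    (norm_lt_apply_zero_of_mem_ball_shiftPt hy).le), fun y => norm_sub_le_of_mem_ball_shiftPt, ?_⟩
  set S := {y : EuclideanSpace ℝ (Fin n) | y 0 < l}
  set B := ball (reflHyp l (shiftPt x)) ‖x‖
  have hBS : B ⊆ S := ball_reflHyp_shiftPt_subset_halfspace hl x
  have hint : IntegrableOn (fun y => ‖y - reflHyp l x‖ ^ (-((n : ℝ) + α))) S :=
    (integrableOn_compl_ball_rpow_neg_norm_sub volume _ (sub_pos.2 hx)
      (by simpa using hα.1)).mono_set (halfspace_subset_compl_ball_reflHyp l x)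
  have hkernel : ∀ y ∈ B, (4 * ‖x‖) ^ (-((n : ℝ) + α)) ≤ ‖y - reflHyp l x‖ ^ (-((n : ℝ) + α)) :=
    fun y hy => by
      have hfar := halfspace_subset_compl_ball_reflHyp l x (hBS hy)
      rw [mem_compl_iff, mem_ball, not_lt, dist_eq_norm] at hfar
      refine Real.rpow_le_rpow_of_nonpos (by linarith) ?_ (by linarith [hα.1])
      rw [← norm_sub_reflHyp_comm]
      exact norm_sub_le_of_mem_ball_shiftPt (reflHyp_mem_ball.2 hy)
  calc _ = (4 * ‖x‖) ^ (-((n : ℝ) + α)) * volume.real B := by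
        rw [measureReal_def, Measure.addHaar_ball_of_pos _ _ hxpos, ENNReal.toReal_mul,
          ENNReal.toReal_ofReal (by positivity), finrank_euclideanSpace_fin,
          mul_rpow_neg_mul_pow_mul four_pos hxpos]
    _ ≤ ∫ y in S, ‖y - reflHyp l x‖ ^ (-((n : ℝ) + α)) :=
        mul_measureReal_le_setIntegral measurableSet_ball measure_ball_lt_top.ne hBS hint
          (ae_of_all _ fun _ => by positivity) hkernel
    _ = _ := by simp_rw [norm_sub_reflHyp_comm l x]

/-- For `λ ≤ 0` and `x ∈ Σ_λ`, the ball of radius `|x|` centered at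
`x¹ = (3|x| + x_1, x')` lies outside `Σ_λ`, the kernel is bounded below on it,
and consequently `∫_{Σ_λ} |x − y^λ|^{−(n+α)} dy ≥ ω_n / (4^{n+α} |x|^α)`. -/
theorem kernel_integral_lower_bound {n : ℕ} [NeZero n] (α l : ℝ)
    (hα : α ∈ Ioo (0 : ℝ) 2) (hl : l ≤ 0)
    (x : EuclideanSpace ℝ (Fin n)) (hx : x 0 < l) (hx0 : x ≠ 0) :
    Metric.ball (shiftPt x) ‖x‖ ⊆ {y : EuclideanSpace ℝ (Fin n) | y 0 < l}ᶜ ∧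
    (∀ y ∈ Metric.ball (shiftPt x) ‖x‖, ‖x - y‖ ≤ 4 * ‖x‖) ∧
    (volume (Metric.ball (0 : EuclideanSpace ℝ (Fin n)) 1)).toReal /
        ((4 : ℝ) ^ ((n : ℝ) + α) * ‖x‖ ^ α) ≤
      ∫ y in {y : EuclideanSpace ℝ (Fin n) | y 0 < l},
        ‖x - reflHyp l y‖ ^ (-((n : ℝ) + α)) :=
  kernel_integral_lower_bound_general α l hα hl x hx
end

section
/- Symmetry in all directions implies radial symmetry: Let u: ℝ^n → ℝ. Suppose that for every unit vector e ∈ ℝ^n there exists c_e ∈ ℝ such that u is symmetric with respect to the hyperplane {x : x·e = c_e}, i.e. u(x + 2(c_e − x·e)e) = u(x) for all x. Then there exists x₀ ∈ ℝ^n such that u is radially symmetric about x₀: u(x) = u(y) whenever |x − x₀| = |y − x₀|. -/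
open scoped RealInnerProductSpace

/-!
Reflections across `{⟪x, e⟫ = c}` conjugate translations by periods of `u` into translations by
periods, so the periods of `u` form a subgroup stable under all linear reflections. A nonzero period
`w` therefore makes every vector of norm `‖w‖` a period; in dimension at least two their differences
fill the ball of radius `2‖w‖`, and `u` is constant. Otherwise the hyperplane of symmetry in each
direction is unique, since two parallel ones compose to a translation. Composing the reflections in
the directions of an orthonormal basis gives a point symmetry about some `x₀`; it carries each
hyperplane of symmetry to a parallel one, so by uniqueness all of them pass through `x₀`. Two points
equidistant from `x₀` are exchanged by the reflection across their perpendicular bisector, which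
passes through `x₀`. In dimension at most one the point symmetry alone suffices.
-/

open Function Module

section

variable {F : Type*} [NormedAddCommGroup F] [InnerProductSpace ℝ F]

def HyperplaneSymmetric (u : F → ℝ) (e : F) (c : ℝ) : Prop :=
  ∀ x, u (x + (2 * (c - ⟪x, e⟫)) • e) = u x

variable {u : F → ℝ} {e : F} {c : ℝ}

namespace HyperplaneSymmetric

theorem periodic_sub (he : ‖e‖ = 1) {c' : ℝ} (h : HyperplaneSymmetric u e c)
    (h' : HyperplaneSymmetric u e c') : Periodic u ((2 * (c - c')) • e) := by
  intro x
  have hmirror : (x + (2 * (c' - ⟪x, e⟫)) • e) + (2 * (c - ⟪x + (2 * (c' - ⟪x, e⟫)) • e, e⟫)) • e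
      = x + (2 * (c - c')) • e := by
    simp only [inner_add_left, real_inner_smul_left, inner_self_eq_one_of_norm_eq_one he]
    module
  rw [← hmirror, h, h']

theorem periodic_reflect (he : ‖e‖ = 1) (h : HyperplaneSymmetric u e c) {w : F}
    (hw : Periodic u w) : Periodic u (w - (2 * ⟪w, e⟫) • e) := by
  intro x
  have hconj : (x + (w - (2 * ⟪w, e⟫) • e)) + (2 * (c - ⟪x + (w - (2 * ⟪w, e⟫) • e), e⟫)) • e
      = (x + (2 * (c - ⟪x, e⟫)) • e) + w := by
    simp only [inner_add_left, inner_sub_left, real_inner_smul_left,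
      inner_self_eq_one_of_norm_eq_one he]
    module
  rw [← h, hconj, hw, h]

theorem pointReflection {x₀ : F} (hx₀ : ∀ x, u ((2 : ℝ) • x₀ - x) = u x)
    (h : HyperplaneSymmetric u e c) : HyperplaneSymmetric u e (2 * ⟪x₀, e⟫ - c) := by
  intro x
  have hconj : (2 : ℝ) • x₀ - (((2 : ℝ) • x₀ - x) + (2 * (c - ⟪(2 : ℝ) • x₀ - x, e⟫)) • e)
      = x + (2 * ((2 * ⟪x₀, e⟫ - c) - ⟪x, e⟫)) • e := by
    simp only [inner_sub_left, real_inner_smul_left]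
    module
  rw [← hconj, hx₀, h, hx₀]

end HyperplaneSymmetric

theorem exists_unit_reflect_eq {x y x₀ : F} (hxy : x ≠ y) (h : ‖x - x₀‖ = ‖y - x₀‖) :
    ∃ e : F, ‖e‖ = 1 ∧ x + (2 * (⟪x₀, e⟫ - ⟪x, e⟫)) • e = y := by
  have hd : x - y ≠ 0 := sub_ne_zero.mpr hxy
  refine ⟨‖x - y‖⁻¹ • (x - y), norm_smul_inv_norm hd, ?_⟩
  have hbisector : 2 * (⟪x₀, x - y⟫ - ⟪x, x - y⟫) = -‖x - y‖ ^ 2 := by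
    have := norm_sub_sq_real (x - x₀) (x - y)
    rw [sub_sub_sub_cancel_left, h, inner_sub_left] at this
    linarith
  have hcoef : 2 * (⟪x₀, ‖x - y‖⁻¹ • (x - y)⟫ - ⟪x, ‖x - y‖⁻¹ • (x - y)⟫) * ‖x - y‖⁻¹ = -1 := by
    rw [real_inner_smul_right, real_inner_smul_right, ← mul_sub, mul_left_comm, hbisector]
    field_simp
  rw [smul_smul, hcoef]
  module

theorem Function.Periodic.of_norm_eq (hsymm : ∀ e : F, ‖e‖ = 1 → ∃ c, HyperplaneSymmetric u e c)
    {v w : F} (hw : Periodic u w) (hvw : ‖v‖ = ‖w‖) : Periodic u v := by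
  rcases eq_or_ne w v with rfl | hne
  · exact hw
  obtain ⟨e, he, hwv⟩ := exists_unit_reflect_eq (x₀ := 0) hne (by simpa using hvw.symm)
  obtain ⟨c, hc⟩ := hsymm e he
  rw [inner_zero_left, zero_sub, mul_neg, neg_smul, ← sub_eq_add_neg] at hwv
  exact hwv ▸ hc.periodic_reflect he hw

theorem Function.Periodic.of_forall_norm_le {ε : ℝ} (hε : 0 < ε)
    (h : ∀ z : F, ‖z‖ ≤ ε → Periodic u z) (z : F) : Periodic u z := by
  obtain ⟨k, hk⟩ := exists_nat_gt (‖z‖ / ε)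
  have hk0 : (0 : ℝ) < k := lt_of_le_of_lt (by positivity) hk
  have hsmall : ‖(k : ℝ)⁻¹ • z‖ ≤ ε := by
    rw [norm_smul, norm_inv, Real.norm_natCast, inv_mul_le_iff₀ hk0]
    rw [div_lt_iff₀ hε] at hk
    linarith
  have := (h _ hsmall).nsmul k
  rwa [← Nat.cast_smul_eq_nsmul ℝ, smul_inv_smul₀ hk0.ne'] at this

theorem exists_norm_eq_one_inner_eq_zero (hdim : 2 ≤ finrank ℝ F) (z : F) :
    ∃ b : F, ‖b‖ = 1 ∧ ⟪z, b⟫ = 0 := by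
  have hne : (ℝ ∙ z)ᗮ ≠ ⊥ := by
    rw [Ne, Submodule.orthogonal_eq_bot_iff]
    intro htop
    have := finrank_span_le_card (R := ℝ) ({z} : Set F)
    rw [htop, finrank_top] at this
    simp at this
    omega
  obtain ⟨b, hb, hb0⟩ := Submodule.exists_mem_ne_zero_of_ne_bot hne
  refine ⟨‖b‖⁻¹ • b, norm_smul_inv_norm hb0, ?_⟩
  rw [real_inner_smul_right, Submodule.mem_orthogonal_singleton_iff_inner_right.mp hb, mul_zero]

theorem exists_sub_eq_of_norm_le (hdim : 2 ≤ finrank ℝ F) {r : ℝ} {z : F} (hz : ‖z‖ ≤ 2 * r) :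
    ∃ v w : F, ‖v‖ = r ∧ ‖w‖ = r ∧ v - w = z := by
  obtain ⟨b, hb, hzb⟩ := exists_norm_eq_one_inner_eq_zero hdim z
  set t := √(r ^ 2 - ‖z‖ ^ 2 / 4)
  have ht : t ^ 2 = r ^ 2 - ‖z‖ ^ 2 / 4 := Real.sq_sqrt (by nlinarith [norm_nonneg z])
  have hnorm : ∀ s : ℝ, ‖s • z + t • b‖ ^ 2 = s ^ 2 * ‖z‖ ^ 2 + t ^ 2 := by
    intro s
    rw [norm_add_sq_real, real_inner_smul_left, real_inner_smul_right, hzb, norm_smul, norm_smul,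
      hb, Real.norm_eq_abs, Real.norm_eq_abs]
    ring_nf
    simp [mul_comm]
  have hr : 0 ≤ r := by linarith [norm_nonneg z]
  refine ⟨(1 / 2 : ℝ) • z + t • b, (-1 / 2 : ℝ) • z + t • b, ?_, ?_, by module⟩
  · rw [← sq_eq_sq₀ (norm_nonneg _) hr, hnorm, ht]; ring
  · rw [← sq_eq_sq₀ (norm_nonneg _) hr, hnorm, ht]; ring

theorem eq_of_periodic_of_ne_zero (hdim : 2 ≤ finrank ℝ F)
    (hsymm : ∀ e : F, ‖e‖ = 1 → ∃ c, HyperplaneSymmetric u e c) {w : F} (hw : Periodic u w)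
    (hw0 : w ≠ 0) (x y : F) : u x = u y := by
  have hball : ∀ z : F, ‖z‖ ≤ 2 * ‖w‖ → Periodic u z := by
    intro z hz
    obtain ⟨v₁, v₂, hv₁, hv₂, rfl⟩ := exists_sub_eq_of_norm_le hdim hz
    exact (hw.of_norm_eq hsymm hv₁).sub_period (hw.of_norm_eq hsymm hv₂)
  have hall := Periodic.of_forall_norm_le (by positivity) hball
  simpa using (hall (y - x) x).symm

theorem Orthonormal.hyperplaneSymmetric_sum {ι : Type*} [DecidableEq ι] {b : ι → F}
    (hb : Orthonormal ℝ b) {c : ι → ℝ} (hc : ∀ i, HyperplaneSymmetric u (b i) (c i))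
    (s : Finset ι) (x : F) : u (x + ∑ i ∈ s, (2 * (c i - ⟪x, b i⟫)) • b i) = u x := by
  induction s using Finset.induction_on with
  | empty => simp
  | insert k s hk ih =>
    have hperp : ⟪x + ∑ i ∈ s, (2 * (c i - ⟪x, b i⟫)) • b i, b k⟫ = ⟪x, b k⟫ := by
      rw [inner_add_left, sum_inner, Finset.sum_eq_zero, add_zero]
      intro i hi
      rw [real_inner_smul_left, hb.inner_eq_zero (ne_of_mem_of_not_mem hi hk), mul_zero]
    have hreflect := hc k (x + ∑ i ∈ s, (2 * (c i - ⟪x, b i⟫)) • b i)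
    rw [hperp] at hreflect
    rw [Finset.sum_insert hk, ← ih, ← hreflect]
    congr 1
    abel

theorem exists_pointSymmetric [FiniteDimensional ℝ F]
    (hsymm : ∀ e : F, ‖e‖ = 1 → ∃ c, HyperplaneSymmetric u e c) :
    ∃ x₀ : F, ∀ x, u ((2 : ℝ) • x₀ - x) = u x := by
  let b := stdOrthonormalBasis ℝ F
  choose c hc using fun i => hsymm (b i) (b.orthonormal.1 i)
  refine ⟨∑ i, c i • b i, fun x => ?_⟩
  have hreflect : x + ∑ i, (2 * (c i - ⟪x, b i⟫)) • b i = (2 : ℝ) • ∑ i, c i • b i - x := by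
    have hx := b.sum_repr' x
    simp only [real_inner_comm] at hx
    simp only [mul_sub, sub_smul, Finset.sum_sub_distrib, mul_smul, ← Finset.smul_sum, hx]
    module
  rw [← hreflect, b.orthonormal.hyperplaneSymmetric_sum hc]

theorem HyperplaneSymmetric.eq_inner (hdim : 2 ≤ finrank ℝ F) {x₀ : F}
    (hsymm : ∀ e : F, ‖e‖ = 1 → ∃ c, HyperplaneSymmetric u e c)
    (hx₀ : ∀ x, u ((2 : ℝ) • x₀ - x) = u x) (hconst : ¬ ∀ x y, u x = u y)
    (he : ‖e‖ = 1) (h : HyperplaneSymmetric u e c) : c = ⟪x₀, e⟫ := by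
  have hper := h.periodic_sub he (h.pointReflection hx₀)
  by_contra hne
  refine hconst (eq_of_periodic_of_ne_zero hdim hsymm hper (smul_ne_zero ?_ ?_))
  · contrapose! hne
    linarith
  · rintro rfl
    simp at he

theorem eq_or_eq_neg_of_norm_eq [FiniteDimensional ℝ F] (hdim : finrank ℝ F ≤ 1) {v w : F}
    (h : ‖v‖ = ‖w‖) : w = v ∨ w = -v := by
  obtain ⟨a, ha⟩ := finrank_le_one_iff.mp hdim
  obtain ⟨s, rfl⟩ := ha v
  obtain ⟨t, rfl⟩ := ha w
  rw [norm_smul, norm_smul] at h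
  rcases eq_or_ne ‖a‖ 0 with ha0 | ha0
  · simp [norm_eq_zero.mp ha0]
  rcases abs_eq_abs.mp (mul_right_cancel₀ ha0 h) with hst | hst
  · simp [hst]
  · simp [hst, neg_smul]

end

theorem radial_of_all_reflections_general {n : ℕ} (u : EuclideanSpace ℝ (Fin n) → ℝ)
    (h : ∀ e : EuclideanSpace ℝ (Fin n), ‖e‖ = 1 →
      ∃ c : ℝ, ∀ x, u (x + (2 * (c - ⟪x, e⟫)) • e) = u x) :
    ∃ x₀ : EuclideanSpace ℝ (Fin n), ∀ x y : EuclideanSpace ℝ (Fin n),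
      ‖x - x₀‖ = ‖y - x₀‖ → u x = u y := by
  obtain ⟨x₀, hx₀⟩ := exists_pointSymmetric h
  refine ⟨x₀, fun x y hxy => ?_⟩
  rcases le_or_gt (finrank ℝ (EuclideanSpace ℝ (Fin n))) 1 with hdim | hdim
  · rcases eq_or_eq_neg_of_norm_eq hdim hxy with hyx | hyx
    · rw [sub_left_inj.mp hyx]
    · rw [← hx₀ x, show y = (2 : ℝ) • x₀ - x by linear_combination (norm := module) hyx]
  by_cases hconst : ∀ x y, u x = u y
  · exact hconst x y
  rcases eq_or_ne x y with rfl | hne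
  · rfl
  obtain ⟨e, he, hxe⟩ := exists_unit_reflect_eq hne hxy
  obtain ⟨c, hc⟩ := h e he
  rw [← hxe, ← HyperplaneSymmetric.eq_inner hdim h hx₀ hconst he hc, hc]

/-- Symmetry in all directions implies radial symmetry: if for every unit
vector `e` the function `u` is invariant under reflection across some
hyperplane `{x : ⟪x, e⟫ = c_e}`, then `u` is radially symmetric about some
point `x₀`. -/
theorem radial_of_all_reflections {n : ℕ} (u : EuclideanSpace ℝ (Fin n) → ℝ)
    (hu : Continuous u)
    (h : ∀ e : EuclideanSpace ℝ (Fin n), ‖e‖ = 1 →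
      ∃ c : ℝ, ∀ x, u (x + (2 * (c - ⟪x, e⟫)) • e) = u x) :
    ∃ x₀ : EuclideanSpace ℝ (Fin n), ∀ x y : EuclideanSpace ℝ (Fin n),
      ‖x - x₀‖ = ‖y - x₀‖ → u x = u y :=
  radial_of_all_reflections_general u h
end
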